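/- arXiv:2108.09236 — 3 statements merged into one kernel-verified Lean document; each statement's English description precedes it below -/
import Mathlib

section
/- Let G be a residually finite group and H a maximal abelian subgroup of G. Then H is separable in G; that is, for every g ∈ G with g ∉ H, there exists a finite-index normal subgroup N of G such that g ∉ HN. -/
open scoped Pointwise

/-- `G` is residually finite: every non-identity element avoids some
finite-index normal subgroup. -/
def ResiduallyFinite (G : Type*) [Group G] : Prop :=
  ∀ g : G, g ≠ 1 → ∃ N : Subgroup G, N.Normal ∧ N.FiniteIndex ∧ g ∉ N

/-- A subgroup `H` is separable in `G`: for every `g ∉ H` there is a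
finite-index normal subgroup `N` with `g ∉ HN`. -/
def SubgroupSeparable {G : Type*} [Group G] (H : Subgroup G) : Prop :=
  ∀ g : G, g ∉ H → ∃ N : Subgroup G, N.Normal ∧ N.FiniteIndex ∧
    g ∉ (H : Set G) * (N : Set G)

open scoped commutatorElement

/-! A maximal abelian subgroup is its own centralizer, so it suffices to separate centralizers.
If `g` does not centralize `S`, some commutator `⁅g, x⁆` with `x ∈ S` is nontrivial; residual
finiteness keeps it nontrivial modulo some finite-index normal `N`, whereas every element of
`centralizer S * N` commutes with `x` modulo `N`. -/

theorem ResiduallyFinite.subgroupSeparable_centralizer {G : Type*} [Group G] (hRF : ResiduallyFinite G)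
    (S : Set G) : SubgroupSeparable (Subgroup.centralizer S) := by
  intro g hg
  obtain ⟨x, hxS, hgx⟩ : ∃ x ∈ S, ⁅g, x⁆ ≠ 1 := by
    simpa [Subgroup.mem_centralizer_iff, commutatorElement_eq_one_iff_mul_comm, eq_comm] using hg
  obtain ⟨N, hN, hNfin, hgxN⟩ := hRF _ hgx
  refine ⟨N, hN, hNfin, ?_⟩
  rintro ⟨c, hc, n, hn, rfl⟩
  have hcx : ⁅c, x⁆ = 1 :=
    commutatorElement_eq_one_iff_mul_comm.mpr (Subgroup.mem_centralizer_iff.mp hc x hxS).symm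
  have hcn : QuotientGroup.mk' N (c * n) = QuotientGroup.mk' N c := by
    rw [map_mul, show QuotientGroup.mk' N n = 1 from (QuotientGroup.eq_one_iff n).mpr hn, mul_one]
  refine hgxN ((QuotientGroup.eq_one_iff _).mp ?_)
  calc QuotientGroup.mk' N ⁅c * n, x⁆
      = ⁅QuotientGroup.mk' N c, QuotientGroup.mk' N x⁆ := by rw [map_commutatorElement, hcn]
    _ = 1 := by rw [← map_commutatorElement, hcx, map_one]

theorem Subgroup.centralizer_eq_self_of_maximal_abelian {G : Type*} [Group G] (H : Subgroup G)
    (hab : ∀ x ∈ H, ∀ y ∈ H, x * y = y * x)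
    (hmax : ∀ K : Subgroup G, (∀ x ∈ K, ∀ y ∈ K, x * y = y * x) → H ≤ K → K = H) :
    Subgroup.centralizer (H : Set G) = H := by
  refine le_antisymm (fun g hg => ?_) (fun h hh => Subgroup.mem_centralizer_iff.mpr
    fun k hk => hab k hk h hh)
  have hcomm : ∀ x ∈ insert g (H : Set G), ∀ y ∈ insert g (H : Set G), x * y = y * x := by
    rintro x (rfl | hx) y (rfl | hy)
    · rfl
    · exact (Subgroup.mem_centralizer_iff.mp hg y hy).symm
    · exact Subgroup.mem_centralizer_iff.mp hg x hx
    · exact hab x hx y hy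
  have hKcomm := Subgroup.isMulCommutative_closure hcomm
  have hK : Subgroup.closure (insert g (H : Set G)) = H :=
    hmax _ (fun x hx y hy => congrArg Subtype.val (hKcomm.is_comm.comm ⟨x, hx⟩ ⟨y, hy⟩))
      (fun h hh => Subgroup.subset_closure (Set.mem_insert_of_mem g hh))
  exact hK ▸ Subgroup.subset_closure (Set.mem_insert g _)

/-- A maximal abelian subgroup of a residually finite group is separable. -/
theorem stmt_0 {G : Type*} [Group G] (hRF : ResiduallyFinite G) (H : Subgroup G)
    (hab : ∀ x ∈ H, ∀ y ∈ H, x * y = y * x)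
    (hmax : ∀ K : Subgroup G, (∀ x ∈ K, ∀ y ∈ K, x * y = y * x) → H ≤ K → K = H) :
    SubgroupSeparable H :=
  Subgroup.centralizer_eq_self_of_maximal_abelian H hab hmax ▸
    hRF.subgroupSeparable_centralizer H
end

section
/- Let G be a residually finite group and H a maximal nilpotent subgroup of G. Then H is separable in G. -/
open scoped Pointwise

theorem ResiduallyFinite.eq_bot_of_forall_normal_finiteIndex_le {G : Type*} [Group G]
    (hRF : ResiduallyFinite G) {L : Subgroup G}
    (hL : ∀ N : Subgroup G, N.Normal → N.FiniteIndex → L ≤ N) : L = ⊥ := by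
  refine (Subgroup.eq_bot_iff_forall L).2 fun x hx => ?_
  by_contra hx1
  obtain ⟨N, hN, hNfi, hxN⟩ := hRF x hx1
  exact hxN (hL N hN hNfi hx)

namespace Subgroup

variable {G Q : Type*} [Group G] [Group Q]

theorem map_sup_zpowers_le_of_mem_mul (f : G →* Q) {H N : Subgroup G} (hN : N ≤ f.ker) {g : G}
    (hg : g ∈ (H : Set G) * (N : Set G)) : (H ⊔ zpowers g).map f ≤ H.map f := by
  obtain ⟨h, hh, n, hn, rfl⟩ := hg
  have hfg : f (h * n) ∈ H.map f := ⟨h, hh, by rw [map_mul, hN hn, mul_one]⟩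
  rw [map_le_iff_le_comap]
  exact sup_le (le_comap_map f H) (zpowers_le.2 hfg)

theorem lowerCentralSeries_le_ker_of_map_le (f : G →* Q) {H K : Subgroup G} {c : ℕ}
    (hc : H.lowerCentralSeries c = ⊥) (hKH : K.map f ≤ H.map f) :
    K.lowerCentralSeries c ≤ f.ker := by
  rw [← map_eq_bot_iff, eq_bot_iff, map_lowerCentralSeries]
  calc (K.map f).lowerCentralSeries c
      ≤ (H.map f).lowerCentralSeries c := lowerCentralSeries_mono c hKH
    _ = (H.lowerCentralSeries c).map f := (map_lowerCentralSeries H f c).symm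
    _ = ⊥ := by rw [hc, map_bot]

end Subgroup

/-- A maximal nilpotent subgroup of a residually finite group is separable. -/
theorem stmt_1 {G : Type*} [Group G] (hRF : ResiduallyFinite G) (H : Subgroup G)
    (hnilp : Group.IsNilpotent H)
    (hmax : ∀ K : Subgroup G, Group.IsNilpotent K → H ≤ K → K = H) :
    SubgroupSeparable H := by
  intro g hg
  by_contra! hmem
  obtain ⟨c, hc⟩ := (Subgroup.isNilpotent_iff_lowerCentralSeries H).1 hnilp
  set K := H ⊔ Subgroup.zpowers g
  have hKc : K.lowerCentralSeries c = ⊥ := by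
    refine hRF.eq_bot_of_forall_normal_finiteIndex_le fun N hN hNfi => ?_
    rw [← QuotientGroup.ker_mk' N]
    exact Subgroup.lowerCentralSeries_le_ker_of_map_le _ hc
      (Subgroup.map_sup_zpowers_le_of_mem_mul _ (QuotientGroup.ker_mk' N).ge (hmem N hN hNfi))
  have hKH : K = H :=
    hmax K (Subgroup.isNilpotent_of_lowerCentralSeries_eq_bot hKc) le_sup_left
  exact hg (hKH ▸ Subgroup.mem_sup_right (Subgroup.mem_zpowers g))
end

section
/- Let G act on a tree T and let A ≤ G be an abelian subgroup containing an element g ≠ 1 whose fixed-point set in T is exactly one vertex v. If the stabilizer G_v of v satisfies: every abelian subgroup of G_v containing A ∩ G_v equals A ∩ G_v, and A ∩ G_v is the stabilizer-intersection A (i.e., A ≤ G_v), then A is a maximal abelian subgroup of G. -/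
open MulAction Pointwise

theorem MulAction.centralizer_le_stabilizer_of_fixedBy_eq_singleton {G α : Type*} [Group G]
    [MulAction G α] {g : G} {v : α} (hfix : fixedBy α g = {v}) :
    Subgroup.centralizer {g} ≤ stabilizer G v := by
  intro h hh
  have hperm : h • fixedBy α g = fixedBy α g :=
    fixedBy_mem_fixedBy_of_commute (Subgroup.mem_centralizer_singleton_iff.mp hh).symm
  rw [hfix, Set.smul_set_singleton, Set.singleton_eq_singleton_iff] at hperm
  exact hperm

theorem stmt_11_general {G V : Type*} [Group G] [MulAction G V]
    (A : Subgroup G)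
    (v : V) (g : G) (hgA : g ∈ A)
    (hfix : {x : V | g • x = x} = {v})
    (hmaxv : ∀ B : Subgroup G, B ≤ MulAction.stabilizer G v →
      (∀ x ∈ B, ∀ y ∈ B, x * y = y * x) → A ≤ B → B = A) :
    ∀ B : Subgroup G, (∀ x ∈ B, ∀ y ∈ B, x * y = y * x) → A ≤ B → B = A := by
  intro B hBab hAB
  have hB_centralizes : B ≤ Subgroup.centralizer {g} := fun b hb ↦
    Subgroup.mem_centralizer_singleton_iff.mpr (hBab b hb g (hAB hgA))
  exact hmaxv B (hB_centralizes.trans (centralizer_le_stabilizer_of_fixedBy_eq_singleton hfix))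
    hBab hAB

/-- Let `G` act on a tree `T` and let `A ≤ G` be an abelian subgroup containing
an element `g ≠ 1` whose fixed-point set in `T` is exactly `{v}`.  If
`A ≤ G_v` and every abelian subgroup of the stabilizer `G_v` containing `A`
equals `A` (i.e. `A` is maximal abelian in `G_v`), then `A` is a maximal
abelian subgroup of `G`. -/
theorem stmt_11 {G V : Type*} [Group G] [MulAction G V]
    (T : SimpleGraph V) (hT : T.IsTree)
    (hact : ∀ (g : G) (a b : V), T.Adj a b → T.Adj (g • a) (g • b))
    (A : Subgroup G) (hab : ∀ x ∈ A, ∀ y ∈ A, x * y = y * x)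
    (v : V) (g : G) (hgA : g ∈ A) (hg : g ≠ 1)
    (hfix : {x : V | g • x = x} = {v})
    (hAv : A ≤ MulAction.stabilizer G v)
    (hmaxv : ∀ B : Subgroup G, B ≤ MulAction.stabilizer G v →
      (∀ x ∈ B, ∀ y ∈ B, x * y = y * x) → A ≤ B → B = A) :
    ∀ B : Subgroup G, (∀ x ∈ B, ∀ y ∈ B, x * y = y * x) → A ≤ B → B = A :=
  stmt_11_general A v g hgA hfix hmaxv
end
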